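/- Equality λ(G) = √m holds for a triangle-free graph G with m ≥ 1 edges if and only if G is a complete bipartite graph together with possibly some isolated vertices. -/

import Mathlib

open Classical in
noncomputable def adjMat {V : Type*} [Fintype V] (G : SimpleGraph V) : Matrix V V ℝ :=
  Matrix.of fun i j => if G.Adj i j then 1 else 0

theorem adjMat_isHermitian {V : Type*} [Fintype V] (G : SimpleGraph V) :
    (adjMat G).IsHermitian := by
  ext i j
  simp only [adjMat, Matrix.conjTranspose_apply, Matrix.of_apply, starRingEnd_apply]
  rw [G.adj_comm]
  simp

/-- Spectral radius: the largest adjacency eigenvalue. -/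
noncomputable def specRad {V : Type*} [Fintype V] [DecidableEq V] (G : SimpleGraph V) : ℝ :=
  ⨆ i, (adjMat_isHermitian G).eigenvalues i

/-- `G` contains a cycle of length `ℓ`. -/
def hasCycle {V : Type*} (G : SimpleGraph V) (ℓ : ℕ) : Prop :=
  ∃ (v : V) (w : G.Walk v v), w.IsCycle ∧ w.length = ℓ

/-!
Let `x` be an eigenvector of `A = adjMatrix G` for `λ = specRad G`. Then `y = |x|` satisfies
`|λ| y ≤ A y` entrywise, so at a vertex `u` where `y` is maximal,
`λ² y u ≤ (A² y) u = ∑ y w` over the walks `u ~ v ~ w`. In a triangle-free graph the walk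
`u ~ v ~ w` is determined by its last edge `vw`, so there are at most `m` such walks and
`λ² ≤ m`. If `λ² = m`, every edge is the last edge of such a walk, i.e. `N(u)` is a vertex cover,
and `y w = y u` at the end of each walk. Every vertex `w` at the end of a walk from `u` is then
again a maximum of `y`, so `N(w)` is a vertex cover too; as `w ≁ u`, `w` is adjacent to all of
`N(u)`, and `G` is complete bipartite between `N(u)` and the ends of these walks. Conversely,
`K_{s,t}` has the eigenvector equal to `√(|s| |t|)` on `s` and to `|s|` on `t`, with eigenvalue
`√(|s| |t|)`.
-/

open Finset Matrix

namespace SimpleGraph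

variable {V : Type*} [Fintype V] (G : SimpleGraph V) [DecidableRel G.Adj]

def twoWalksFrom (u : V) : Finset (Σ _ : V, V) :=
  (G.neighborFinset u).sigma fun v => G.neighborFinset v

variable {G}

theorem mem_twoWalksFrom {u : V} {p : Σ _ : V, V} :
    p ∈ G.twoWalksFrom u ↔ G.Adj u p.1 ∧ G.Adj p.1 p.2 := by
  simp [twoWalksFrom]

theorem injOn_mk_twoWalksFrom (h : G.CliqueFree 3) (u : V) :
    Set.InjOn (fun p : Σ _ : V, V => s(p.1, p.2)) (G.twoWalksFrom u) := by
  rintro ⟨v, w⟩ hp ⟨v', w'⟩ hq hpq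
  rw [mem_coe, mem_twoWalksFrom] at hp hq
  rcases Sym2.eq_iff.mp hpq with ⟨rfl, rfl⟩ | ⟨rfl, rfl⟩
  · rfl
  · exact (G.isIndepSet_neighborSet_of_triangleFree h u hp.1 hq.1 hp.2.ne hp.2).elim

theorem card_twoWalksFrom_le (h : G.CliqueFree 3) (u : V) :
    #(G.twoWalksFrom u) ≤ #G.edgeFinset :=
  card_le_card_of_injOn _ (fun p hp => by simpa using (mem_twoWalksFrom.mp hp).2)
    (injOn_mk_twoWalksFrom h u)

theorem isVertexCover_neighborSet_of_card_edgeFinset_le [DecidableEq V] (h : G.CliqueFree 3)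
    {u : V} (hcard : #G.edgeFinset ≤ #(G.twoWalksFrom u)) :
    G.IsVertexCover (G.neighborSet u) := by
  intro a b hab
  have himage : (G.twoWalksFrom u).image (fun p => s(p.1, p.2)) = G.edgeFinset := by
    refine eq_of_subset_of_card_le (fun e he => ?_) ?_
    · obtain ⟨p, hp, rfl⟩ := mem_image.mp he
      simpa using (mem_twoWalksFrom.mp hp).2
    · rwa [card_image_of_injOn (injOn_mk_twoWalksFrom h u)]
  obtain ⟨⟨v, w⟩, hp, hvw⟩ := mem_image.mp (himage ▸ G.mem_edgeFinset.mpr hab : s(a, b) ∈ _)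
  rcases Sym2.eq_iff.mp hvw with ⟨rfl, -⟩ | ⟨rfl, -⟩
  · exact Or.inl (mem_twoWalksFrom.mp hp).1
  · exact Or.inr (mem_twoWalksFrom.mp hp).1

theorem exists_completeBipartite_of_isVertexCover (h : G.CliqueFree 3)
    {u v : V} (huv : G.Adj u v)
    (hcover : ∀ w, (∃ v, G.Adj u v ∧ G.Adj v w) → G.IsVertexCover (G.neighborSet w)) :
    ∃ s t : Finset V, s.Nonempty ∧ t.Nonempty ∧ Disjoint s t ∧
      ∀ a b, G.Adj a b ↔ (a ∈ s ∧ b ∈ t ∨ a ∈ t ∧ b ∈ s) := by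
  set S := univ.filter fun w => ∃ v, G.Adj u v ∧ G.Adj v w
  have hmemS {w} : w ∈ S ↔ ∃ v, G.Adj u v ∧ G.Adj v w := by simp [S]
  have huS : u ∈ S := hmemS.mpr ⟨v, huv, huv.symm⟩
  have hdisj : Disjoint S (G.neighborFinset u) := by
    refine Finset.disjoint_left.mpr fun w hwS hwT => ?_
    obtain ⟨v, huv, hvw⟩ := hmemS.mp hwS
    exact G.isIndepSet_neighborSet_of_triangleFree h u huv (by simpa using hwT) hvw.ne hvw
  refine ⟨S, G.neighborFinset u, ⟨u, huS⟩, ⟨v, by simpa using huv⟩, hdisj, fun a b => ?_⟩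
  simp only [mem_neighborFinset]
  constructor
  · intro hab
    rcases hcover u (hmemS.mp huS) hab with hua | hub
    · exact Or.inr ⟨hua, hmemS.mpr ⟨a, hua, hab⟩⟩
    · exact Or.inl ⟨hmemS.mpr ⟨b, hub, hab.symm⟩, hub⟩
  · have hadj {w x} (hw : w ∈ S) (hx : G.Adj u x) : G.Adj w x :=
      (hcover w (hmemS.mp hw) hx).resolve_left fun hwu =>
        Finset.disjoint_left.mp hdisj hw (by simpa using hwu.symm)
    rintro (⟨haS, hub⟩ | ⟨hua, hbS⟩)
    · exact hadj haS hub
    · exact (hadj hbS hua).symm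

section SubEigenvector

variable {μ : ℝ} {y : V → ℝ}

theorem sq_mul_le_sum_twoWalksFrom (hμ : 0 ≤ μ)
    (hy : ∀ v, μ * y v ≤ ∑ w ∈ G.neighborFinset v, y w) (u : V) :
    μ ^ 2 * y u ≤ ∑ p ∈ G.twoWalksFrom u, y p.2 :=
  calc μ ^ 2 * y u = μ * (μ * y u) := by ring
    _ ≤ μ * ∑ v ∈ G.neighborFinset u, y v := mul_le_mul_of_nonneg_left (hy u) hμ
    _ = ∑ v ∈ G.neighborFinset u, μ * y v := mul_sum ..
    _ ≤ ∑ v ∈ G.neighborFinset u, ∑ w ∈ G.neighborFinset v, y w := sum_le_sum fun v _ => hy v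
    _ = ∑ p ∈ G.twoWalksFrom u, y p.2 := by rw [twoWalksFrom, sum_sigma]

theorem sq_le_card_edgeFinset (h : G.CliqueFree 3) (hμ : 0 ≤ μ)
    (hy : ∀ v, μ * y v ≤ ∑ w ∈ G.neighborFinset v, y w) {u : V} (hu : ∀ v, y v ≤ y u)
    (hyu : 0 < y u) : μ ^ 2 ≤ #G.edgeFinset := by
  refine le_of_mul_le_mul_right ?_ hyu
  calc μ ^ 2 * y u ≤ ∑ p ∈ G.twoWalksFrom u, y p.2 := sq_mul_le_sum_twoWalksFrom hμ hy u
    _ ≤ #(G.twoWalksFrom u) * y u := by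
      simpa using sum_le_card_nsmul (G.twoWalksFrom u) (fun p => y p.2) _ fun p _ => hu p.2
    _ ≤ #G.edgeFinset * y u := by gcongr; exact card_twoWalksFrom_le h u

theorem isVertexCover_neighborSet_of_sq_eq [DecidableEq V] (h : G.CliqueFree 3)
    (hμ : 0 ≤ μ) (hy : ∀ v, μ * y v ≤ ∑ w ∈ G.neighborFinset v, y w) {u : V}
    (hu : ∀ v, y v ≤ y u) (hyu : 0 < y u) (heq : μ ^ 2 = #G.edgeFinset) :
    G.IsVertexCover (G.neighborSet u) ∧ ∀ p ∈ G.twoWalksFrom u, y p.2 = y u := by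
  have hsum := sq_mul_le_sum_twoWalksFrom hμ hy u
  have hle : ∑ p ∈ G.twoWalksFrom u, y p.2 ≤ ∑ _p ∈ G.twoWalksFrom u, y u :=
    sum_le_sum fun p _ => hu p.2
  have hcard : #G.edgeFinset ≤ #(G.twoWalksFrom u) := by
    have := hsum.trans hle
    rw [heq, sum_const, nsmul_eq_mul] at this
    exact_mod_cast le_of_mul_le_mul_right this hyu
  refine ⟨isVertexCover_neighborSet_of_card_edgeFinset_le h hcard, ?_⟩
  refine (sum_eq_sum_iff_of_le fun p _ => hu p.2).mp (le_antisymm hle ?_)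
  have := card_twoWalksFrom_le h u
  rw [sum_const, nsmul_eq_mul, le_antisymm this hcard, ← heq]
  exact hsum

theorem exists_completeBipartite_of_sq_eq [DecidableEq V] (h : G.CliqueFree 3) (hμ : 0 ≤ μ)
    (hy : ∀ v, μ * y v ≤ ∑ w ∈ G.neighborFinset v, y w) {u : V} (hu : ∀ v, y v ≤ y u)
    (hyu : 0 < y u) (heq : μ ^ 2 = #G.edgeFinset) {a b : V} (hab : G.Adj a b) :
    ∃ s t : Finset V, s.Nonempty ∧ t.Nonempty ∧ Disjoint s t ∧
      ∀ a b, G.Adj a b ↔ (a ∈ s ∧ b ∈ t ∨ a ∈ t ∧ b ∈ s) := by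
  obtain ⟨hcover, hmax⟩ := isVertexCover_neighborSet_of_sq_eq h hμ hy hu hyu heq
  obtain ⟨v, huv⟩ : ∃ v, G.Adj u v := (hcover hab).elim (⟨a, ·⟩) (⟨b, ·⟩)
  refine exists_completeBipartite_of_isVertexCover h huv fun w ⟨v, huv, hvw⟩ => ?_
  have hw : y w = y u := hmax ⟨v, w⟩ (mem_twoWalksFrom.mpr ⟨huv, hvw⟩)
  exact (isVertexCover_neighborSet_of_sq_eq h hμ hy (hw ▸ hu) (hw ▸ hyu) heq).1

end SubEigenvector

theorem abs_mul_abs_le_sum_neighborFinset_abs {μ : ℝ} {x : V → ℝ}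
    (hx : G.adjMatrix ℝ *ᵥ x = μ • x) (v : V) :
    |μ| * |x v| ≤ ∑ w ∈ G.neighborFinset v, |x w| := by
  calc |μ| * |x v| = |∑ w ∈ G.neighborFinset v, x w| := by
        rw [← abs_mul, ← smul_eq_mul, ← Pi.smul_apply, ← hx, adjMatrix_mulVec_apply]
    _ ≤ ∑ w ∈ G.neighborFinset v, |x w| := abs_sum_le_sum_abs _ _

theorem neighborFinset_eq_ite [DecidableEq V] {s t : Finset V} (hst : Disjoint s t)
    (hG : ∀ a b, G.Adj a b ↔ (a ∈ s ∧ b ∈ t ∨ a ∈ t ∧ b ∈ s)) (v : V) :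
    G.neighborFinset v = if v ∈ s then t else if v ∈ t then s else ∅ := by
  have : v ∈ s → v ∉ t := fun hv => Finset.disjoint_left.mp hst hv
  ext w
  rw [mem_neighborFinset, hG]
  split_ifs <;> simp_all

theorem card_edgeFinset_eq_card_mul_card [DecidableEq V] {s t : Finset V} (hst : Disjoint s t)
    (hG : ∀ a b, G.Adj a b ↔ (a ∈ s ∧ b ∈ t ∨ a ∈ t ∧ b ∈ s)) :
    #G.edgeFinset = #s * #t := by
  have hdeg (v : V) : G.degree v = (if v ∈ s then #t else 0) + (if v ∈ t then #s else 0) := by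
    have : v ∈ s → v ∉ t := fun hv => Finset.disjoint_left.mp hst hv
    rw [← card_neighborFinset_eq_degree, neighborFinset_eq_ite hst hG]
    split_ifs <;> simp_all
  have := G.sum_degrees_eq_twice_card_edges
  simp only [hdeg, sum_add_distrib, sum_ite_mem, univ_inter, sum_const, smul_eq_mul] at this
  linarith [Nat.mul_comm #s #t]

end SimpleGraph

open SimpleGraph

variable {V : Type*} [Fintype V] {G : SimpleGraph V}

theorem adjMat_eq_adjMatrix [DecidableRel G.Adj] : adjMat G = G.adjMatrix ℝ := by
  ext i j
  simp only [adjMat, of_apply, adjMatrix_apply]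
  congr

theorem exists_mulVec_eq_specRad_smul [DecidableEq V] [Nonempty V] [DecidableRel G.Adj] :
    ∃ x : V → ℝ, x ≠ 0 ∧ G.adjMatrix ℝ *ᵥ x = specRad G • x := by
  have hA := adjMat_isHermitian G
  obtain ⟨i, hi⟩ := Finite.exists_max hA.eigenvalues
  have hspec : specRad G = hA.eigenvalues i :=
    le_antisymm (ciSup_le hi) (le_ciSup (Set.finite_range _).bddAbove i)
  refine ⟨hA.eigenvectorBasis i, ?_, ?_⟩
  · exact (WithLp.ofLp_eq_zero 2).ne.mpr (hA.eigenvectorBasis.orthonormal.ne_zero i)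
  · rw [hspec, ← adjMat_eq_adjMatrix]
    exact hA.mulVec_eigenvectorBasis i

theorem le_specRad_of_mulVec_eq_smul [DecidableEq V] [DecidableRel G.Adj] {μ : ℝ} {z : V → ℝ}
    (hz : z ≠ 0) (h : G.adjMatrix ℝ *ᵥ z = μ • z) : μ ≤ specRad G := by
  have hA := adjMat_isHermitian G
  have hμ : μ ∈ spectrum ℝ (adjMat G) := by
    rw [← spectrum_toLin']
    refine Module.End.HasEigenvalue.mem_spectrum
      (Module.End.hasEigenvalue_of_hasEigenvector (x := z) ?_)
    exact ⟨Module.End.mem_eigenspace_iff.mpr (by rwa [toLin'_apply, adjMat_eq_adjMatrix]), hz⟩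
  obtain ⟨i, rfl⟩ := hA.spectrum_real_eq_range_eigenvalues ▸ hμ
  exact le_ciSup (Set.finite_range _).bddAbove i

theorem exists_abs_specRad_mul_le_sum_neighborFinset [DecidableEq V] [Nonempty V]
    [DecidableRel G.Adj] :
    ∃ (y : V → ℝ) (u : V), 0 < y u ∧ (∀ v, y v ≤ y u) ∧
      ∀ v, |specRad G| * y v ≤ ∑ w ∈ G.neighborFinset v, y w := by
  obtain ⟨x, hx0, hx⟩ := exists_mulVec_eq_specRad_smul (G := G)
  obtain ⟨u, hu⟩ := Finite.exists_max fun v => |x v|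
  obtain ⟨v, hv⟩ := Function.ne_iff.mp hx0
  exact ⟨fun v => |x v|, u, (abs_pos.mpr hv).trans_le (hu v), hu,
    abs_mul_abs_le_sum_neighborFinset_abs hx⟩

theorem specRad_le_sqrt_card_edgeFinset [DecidableEq V] [DecidableRel G.Adj]
    (h : G.CliqueFree 3) : specRad G ≤ √(#G.edgeFinset : ℝ) := by
  cases isEmpty_or_nonempty V
  · simp [specRad]
  obtain ⟨y, u, hyu, hu, hy⟩ := exists_abs_specRad_mul_le_sum_neighborFinset (G := G)
  exact (le_abs_self _).trans <| Real.le_sqrt_of_sq_le <|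
    by simpa using sq_le_card_edgeFinset h (abs_nonneg _) hy hu hyu

theorem exists_completeBipartite_of_specRad_eq [DecidableEq V] [DecidableRel G.Adj]
    (h : G.CliqueFree 3) (heq : specRad G = √(#G.edgeFinset : ℝ)) {a b : V} (hab : G.Adj a b) :
    ∃ s t : Finset V, s.Nonempty ∧ t.Nonempty ∧ Disjoint s t ∧
      ∀ a b, G.Adj a b ↔ (a ∈ s ∧ b ∈ t ∨ a ∈ t ∧ b ∈ s) := by
  have : Nonempty V := ⟨a⟩
  obtain ⟨y, u, hyu, hu, hy⟩ := exists_abs_specRad_mul_le_sum_neighborFinset (G := G)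
  refine exists_completeBipartite_of_sq_eq h (abs_nonneg _) hy hu hyu ?_ hab
  rw [sq_abs, heq, Real.sq_sqrt (Nat.cast_nonneg _)]

theorem sqrt_card_mul_card_le_specRad [DecidableEq V] [DecidableRel G.Adj] {s t : Finset V}
    (hs : s.Nonempty) (ht : t.Nonempty) (hst : Disjoint s t)
    (hG : ∀ a b, G.Adj a b ↔ (a ∈ s ∧ b ∈ t ∨ a ∈ t ∧ b ∈ s)) :
    √(#s * #t) ≤ specRad G := by
  set μ := √(#s * #t : ℝ)
  have hμ : μ * μ = #s * #t := Real.mul_self_sqrt (by positivity)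
  have hts : ∀ w ∈ t, w ∉ s := fun w hw hws => Finset.disjoint_left.mp hst hws hw
  set z : V → ℝ := fun v => if v ∈ s then μ else if v ∈ t then #s else 0
  obtain ⟨w, hw⟩ := ht
  refine le_specRad_of_mulVec_eq_smul (z := z) (Function.ne_iff.mpr ⟨w, ?_⟩) (funext fun v => ?_)
  · simpa [z, hts w hw, hw] using hs.card_pos.ne'
  rw [adjMatrix_mulVec_apply, neighborFinset_eq_ite hst hG, Pi.smul_apply, smul_eq_mul]
  by_cases hvs : v ∈ s
  · rw [if_pos hvs, sum_congr rfl fun w hw => if_neg (hts w hw) |>.trans (if_pos hw)]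
    simp [z, hvs, hμ, mul_comm]
  · by_cases hvt : v ∈ t
    · simp [z, hvs, hvt, sum_congr rfl fun w (hw : w ∈ s) => if_pos hw, mul_comm]
    · simp [z, hvs, hvt]

/-- Equality `λ(G) = √m` holds for a triangle-free graph with `m ≥ 1` edges iff `G` is a
complete bipartite graph together with possibly some isolated vertices. -/
theorem nosal_equality {n : ℕ} (G : SimpleGraph (Fin n)) [DecidableRel G.Adj]
    (h : G.CliqueFree 3) (hm : 1 ≤ G.edgeFinset.card) :
    specRad G = Real.sqrt (G.edgeFinset.card) ↔
      ∃ s t : Finset (Fin n), s.Nonempty ∧ t.Nonempty ∧ Disjoint s t ∧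
        ∀ u v : Fin n, G.Adj u v ↔ ((u ∈ s ∧ v ∈ t) ∨ (u ∈ t ∧ v ∈ s)) := by
  obtain ⟨e, he⟩ := card_pos.mp hm
  induction e using Sym2.ind with | h a b => ?_
  constructor
  · exact fun heq => exists_completeBipartite_of_specRad_eq h heq (G.mem_edgeFinset.mp he)
  · rintro ⟨s, t, hs, ht, hst, hG⟩
    refine le_antisymm (specRad_le_sqrt_card_edgeFinset h) ?_
    rw [card_edgeFinset_eq_card_mul_card hst hG, Nat.cast_mul]
    exact sqrt_card_mul_card_le_specRad hs ht hst hG
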